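/- Let P_1, …, P_n be pairwise orthogonal projections on ℂ^d with ∑_i P_i = 1, and let ρ be a density matrix on ℂ^d. Then the robustness of block coherence is bounded by the ℓ₁-norm of block coherence: inf { s ≥ 0 : ∃ density matrix δ with ρ ≤ (1 + s)·Δ[δ] } ≤ ∑_{i ≠ j} ‖ P_i ρ P_j ‖₁. -/

import Mathlib

/-!
Write `Bᵢⱼ = Pᵢ ρ Pⱼ`, so that `ρ = Δ[ρ] + ∑_{i ≠ j} Bᵢⱼ` and `Bⱼᵢ = Bᵢⱼᴴ`. For `i ≠ j` we have
`Bᵢⱼ² = 0`, hence `|Bᵢⱼ| |Bⱼᵢ| = 0` and `(|Bᵢⱼ| + |Bⱼᵢ|)² = (Bᵢⱼ + Bⱼᵢ)²`, which gives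
`Bᵢⱼ + Bⱼᵢ ≤ |Bᵢⱼ + Bⱼᵢ| = |Bᵢⱼ| + |Bⱼᵢ|`. Summing, `ρ ≤ D := Δ[ρ] + ∑_{i ≠ j} |Bᵢⱼ|`. Since `|Bᵢⱼ|`
lives in the block of `Pⱼ`, `D` is block diagonal, and `tr D = 1 + s` with `s = ∑_{i ≠ j} ‖Bᵢⱼ‖₁`;
so `δ = D / (1 + s)` shows that the robustness is at most `s`.
-/

open Matrix
open scoped ComplexOrder

/-- The trace norm `‖A‖₁ = tr √(Aᴴ A)` of a complex matrix. -/
noncomputable def traceNorm {m n : Type*} [Fintype m] [Fintype n] [DecidableEq n]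
    (A : Matrix m n ℂ) : ℝ :=
  ((Matrix.posSemidef_conjTranspose_mul_self A).1.eigenvectorUnitary.1 *
      diagonal (((↑) : ℝ → ℂ) ∘ Real.sqrt ∘ (Matrix.posSemidef_conjTranspose_mul_self A).1.eigenvalues) *
      (star (Matrix.posSemidef_conjTranspose_mul_self A).1.eigenvectorUnitary : Matrix n n ℂ)).trace.re

open scoped MatrixOrder

theorem Finset.sum_offDiag_swap {α M : Type*} [DecidableEq α] [AddCommMonoid M] (s : Finset α)
    (f : α × α → M) : ∑ q ∈ s.offDiag, f q.swap = ∑ q ∈ s.offDiag, f q :=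
  Finset.sum_equiv (Equiv.prodComm α α) (by simp; tauto) (by simp)

section TraceNorm

variable {m n : Type*} [Fintype m] [Fintype n] [DecidableEq n]

theorem ofReal_traceNorm (A : Matrix m n ℂ) : (traceNorm A : ℂ) = (CFC.sqrt (Aᴴ * A)).trace := by
  have hA := posSemidef_conjTranspose_mul_self A
  have hsqrt : CFC.sqrt (Aᴴ * A) = hA.1.eigenvectorUnitary.1 *
      diagonal (((↑) : ℝ → ℂ) ∘ Real.sqrt ∘ hA.1.eigenvalues) *
      (star hA.1.eigenvectorUnitary : Matrix n n ℂ) := by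
    rw [CFC.sqrt_eq_cfc, cfc_nnreal_eq_real _ _ hA.nonneg, hA.1.cfc_eq]
    simp only [IsHermitian.cfc, Unitary.conjStarAlgAut_apply]
    congr 3
    funext i
    simp [Real.coe_sqrt, Real.coe_toNNReal', max_eq_left (hA.eigenvalues_nonneg i)]
  have htr : 0 ≤ (CFC.sqrt (Aᴴ * A)).trace :=
    (nonneg_iff_posSemidef.mp (CFC.sqrt_nonneg _)).trace_nonneg
  rw [traceNorm, ← hsqrt]
  exact Complex.ext rfl (Complex.nonneg_iff.mp htr).2

theorem traceNorm_nonneg (A : Matrix m n ℂ) : 0 ≤ traceNorm A := by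
  have h := (nonneg_iff_posSemidef.mp (CFC.sqrt_nonneg (Aᴴ * A))).trace_nonneg
  rwa [← ofReal_traceNorm, Complex.zero_le_real] at h

theorem trace_abs_eq_traceNorm [DecidableEq m] (A : Matrix m m ℂ) :
    (CFC.abs A).trace = traceNorm A :=
  (ofReal_traceNorm A).symm

end TraceNorm

namespace Matrix

variable {m 𝕜 : Type*} [Fintype m] [DecidableEq m] [RCLike 𝕜]

theorem sqrt_mul_sqrt_eq_zero {X Y : Matrix m m 𝕜} (hX : 0 ≤ X) (hY : 0 ≤ Y) (hXY : X * Y = 0) :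
    CFC.sqrt X * CFC.sqrt Y = 0 := by
  have hYX : Y * X = 0 := by
    simpa [hX.isSelfAdjoint.star_eq, hY.isSelfAdjoint.star_eq] using congr_arg star hXY
  have hcomm : Commute (CFC.sqrt Y) X := Commute.cfcₙ_nnreal (hYX.trans hXY.symm) _
  rw [← conjTranspose_mul_self_eq_zero]
  calc (CFC.sqrt X * CFC.sqrt Y)ᴴ * (CFC.sqrt X * CFC.sqrt Y)
      = CFC.sqrt Y * (CFC.sqrt X * CFC.sqrt X) * CFC.sqrt Y := by
        rw [← star_eq_conjTranspose, star_mul, (CFC.sqrt_nonneg X).isSelfAdjoint.star_eq,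
          (CFC.sqrt_nonneg Y).isSelfAdjoint.star_eq]
        simp only [mul_assoc]
    _ = X * (CFC.sqrt Y * CFC.sqrt Y) := by rw [CFC.sqrt_mul_sqrt_self X, hcomm.eq, mul_assoc]
    _ = 0 := by rw [CFC.sqrt_mul_sqrt_self Y, hXY]

theorem sqrt_mul_eq_self {X Q : Matrix m m 𝕜} (hX : 0 ≤ X) (hQ : IsStarProjection Q)
    (h : X * Q = X) : CFC.sqrt X * Q = CFC.sqrt X := by
  have hQ' := hQ.one_sub
  have h' : CFC.sqrt X * CFC.sqrt (1 - Q) = 0 :=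
    sqrt_mul_sqrt_eq_zero hX hQ'.nonneg (by rw [mul_sub, mul_one, h, sub_self])
  rwa [CFC.sqrt_unique hQ'.isIdempotentElem.eq hQ'.nonneg, mul_sub, mul_one, sub_eq_zero,
    eq_comm] at h'

theorem mul_sqrt_mul_eq_self {X Q : Matrix m m 𝕜} (hX : 0 ≤ X) (hQ : IsStarProjection Q)
    (h : X * Q = X) : Q * CFC.sqrt X * Q = CFC.sqrt X := by
  have hr := sqrt_mul_eq_self hX hQ h
  have hl : Q * CFC.sqrt X = CFC.sqrt X := by
    simpa [(CFC.sqrt_nonneg X).isSelfAdjoint.star_eq, hQ.isSelfAdjoint.star_eq] using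
      congr_arg star hr
  rw [hl, hr]

theorem le_abs_of_isSelfAdjoint {H : Matrix m m 𝕜} (hH : IsSelfAdjoint H) : H ≤ CFC.abs H :=
  sub_nonneg.mp (CFC.abs_sub_self H ▸ nsmul_nonneg (CFC.negPart_nonneg H) 2)

theorem add_conjTranspose_le_abs_add_abs {B : Matrix m m 𝕜} (hB : B * B = 0) :
    B + Bᴴ ≤ CFC.abs B + CFC.abs Bᴴ := by
  have hBh : Bᴴ * Bᴴ = 0 := by rw [← conjTranspose_mul, hB, conjTranspose_zero]
  have habs : CFC.abs B * CFC.abs Bᴴ = 0 :=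
    sqrt_mul_sqrt_eq_zero (star_mul_self_nonneg _) (star_mul_self_nonneg _) <| by
      simp only [star_eq_conjTranspose, conjTranspose_conjTranspose, mul_assoc,
        ← mul_assoc B B, hB, zero_mul, mul_zero]
  have habs' : CFC.abs Bᴴ * CFC.abs B = 0 := by
    simpa [(CFC.abs_nonneg B).isSelfAdjoint.star_eq, (CFC.abs_nonneg Bᴴ).isSelfAdjoint.star_eq]
      using congr_arg star habs
  have hH : IsSelfAdjoint (B + Bᴴ) := by
    rw [IsSelfAdjoint, star_eq_conjTranspose, conjTranspose_add, conjTranspose_conjTranspose,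
      add_comm]
  suffices CFC.abs (B + Bᴴ) = CFC.abs B + CFC.abs Bᴴ from this ▸ le_abs_of_isSelfAdjoint hH
  refine CFC.sqrt_unique ?_ (add_nonneg (CFC.abs_nonneg _) (CFC.abs_nonneg _))
  rw [hH.star_eq, add_mul, mul_add, mul_add, habs, habs', CFC.abs_mul_abs, CFC.abs_mul_abs]
  simp only [star_eq_conjTranspose, conjTranspose_conjTranspose, add_mul, mul_add, hB, hBh]
  abel

end Matrix

section BlockDephase

variable {m ι 𝕜 : Type*} [Fintype m] [Fintype ι] [RCLike 𝕜] {P : ι → Matrix m m 𝕜}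

variable (P) in
noncomputable def blockDephase : Matrix m m 𝕜 →ₗ[𝕜] Matrix m m 𝕜 :=
  ∑ i, LinearMap.mulLeftRight 𝕜 (P i, P i)

variable (P) in
theorem blockDephase_apply (A : Matrix m m 𝕜) : blockDephase P A = ∑ i, P i * A * P i := by
  simp [blockDephase]

theorem blockDephase_eq_self [DecidableEq ι]
    (horth : ∀ i j, i ≠ j → P i * P j = 0) {A : Matrix m m 𝕜} {j : ι}
    (hA : P j * A * P j = A) : blockDephase P A = A := by
  rw [blockDephase_apply, Finset.sum_eq_single j (fun k _ hk => ?_) (by simp)]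
  · exact hA
  · rw [← hA, ← mul_assoc, ← mul_assoc, horth k j hk]
    simp

theorem blockDephase_blockDephase [DecidableEq ι] (hidem : ∀ i, P i * P i = P i)
    (horth : ∀ i j, i ≠ j → P i * P j = 0) (A : Matrix m m 𝕜) :
    blockDephase P (blockDephase P A) = blockDephase P A := by
  conv_lhs => rw [blockDephase_apply P A, map_sum]
  refine (Finset.sum_congr rfl fun i _ => blockDephase_eq_self horth (j := i) ?_).trans
    (blockDephase_apply P A).symm
  rw [← mul_assoc, ← mul_assoc, hidem, mul_assoc, hidem]

theorem trace_blockDephase [DecidableEq m] (hidem : ∀ i, P i * P i = P i) (hsum : ∑ i, P i = 1)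
    (A : Matrix m m 𝕜) : (blockDephase P A).trace = A.trace := by
  simp_rw [blockDephase_apply, trace_sum, trace_mul_cycle _ A, hidem, ← trace_sum,
    ← Finset.sum_mul, hsum, one_mul]

theorem blockDephase_nonneg (hherm : ∀ i, (P i)ᴴ = P i) {A : Matrix m m 𝕜}
    (hA : 0 ≤ A) : 0 ≤ blockDephase P A := by
  rw [blockDephase_apply]
  refine Finset.sum_nonneg fun i _ => ?_
  simpa [star_eq_conjTranspose, hherm] using star_left_conjugate_nonneg hA (P i)

theorem blockDephase_add_sum_offDiag [DecidableEq ι] [DecidableEq m] (hsum : ∑ i, P i = 1)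
    (A : Matrix m m 𝕜) :
    blockDephase P A + ∑ q ∈ (Finset.univ : Finset ι).offDiag, P q.1 * A * P q.2 = A := by
  calc blockDephase P A + ∑ q ∈ (Finset.univ : Finset ι).offDiag, P q.1 * A * P q.2
      = ∑ q ∈ (Finset.univ : Finset ι) ×ˢ Finset.univ, P q.1 * A * P q.2 := by
        rw [← Finset.diag_union_offDiag, Finset.sum_union (Finset.disjoint_diag_offDiag _),
          Finset.sum_diag, blockDephase_apply]
    _ = (∑ i, P i) * A * ∑ j, P j := by
        rw [Finset.sum_product, Finset.sum_mul, Finset.sum_mul]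
        simp_rw [Finset.mul_sum]
    _ = A := by rw [hsum, one_mul, mul_one]

end BlockDephase

section OffDiagonalBlocks

variable {m ι 𝕜 : Type*} [Fintype m] [DecidableEq m] [Fintype ι] [DecidableEq ι] [RCLike 𝕜]
  {P : ι → Matrix m m 𝕜}

theorem blockDephase_abs_mul_mul (hherm : ∀ i, (P i)ᴴ = P i) (hidem : ∀ i, P i * P i = P i)
    (horth : ∀ i j, i ≠ j → P i * P j = 0) (A : Matrix m m 𝕜) (i j : ι) :
    blockDephase P (CFC.abs (P i * A * P j)) = CFC.abs (P i * A * P j) := by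
  refine blockDephase_eq_self horth (j := j) (mul_sqrt_mul_eq_self
    (star_mul_self_nonneg _) ⟨hidem j, hherm j⟩ ?_)
  simp only [mul_assoc, hidem]

theorem sum_offDiag_le_sum_abs (hherm : ∀ i, (P i)ᴴ = P i)
    (horth : ∀ i j, i ≠ j → P i * P j = 0) {A : Matrix m m 𝕜} (hA : Aᴴ = A) :
    ∑ q ∈ (Finset.univ : Finset ι).offDiag, P q.1 * A * P q.2 ≤
      ∑ q ∈ (Finset.univ : Finset ι).offDiag, CFC.abs (P q.1 * A * P q.2) := by
  set B : ι × ι → Matrix m m 𝕜 := fun q => P q.1 * A * P q.2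
  have hswap (q : ι × ι) : B q.swap = (B q)ᴴ := by
    simp only [B, conjTranspose_mul, hherm, hA, Prod.fst_swap, Prod.snd_swap, mul_assoc]
  have hpair (q) (hq : q ∈ (Finset.univ : Finset ι).offDiag) :
      B q + B q.swap ≤ CFC.abs (B q) + CFC.abs (B q.swap) := by
    rw [hswap]
    refine add_conjTranspose_le_abs_add_abs ?_
    simp only [B, mul_assoc, ← mul_assoc (P q.2) (P q.1),
      horth _ _ (Finset.mem_offDiag.mp hq).2.2.symm, zero_mul, mul_zero]
  have h := Finset.sum_le_sum hpair
  rw [Finset.sum_add_distrib, Finset.sum_add_distrib, Finset.sum_offDiag_swap _ B,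
    Finset.sum_offDiag_swap _ fun q => CFC.abs (B q), ← two_smul ℝ, ← two_smul ℝ] at h
  exact le_of_smul_le_smul_left h two_pos

end OffDiagonalBlocks

theorem exists_blockDephase_fixed_ge {m ι : Type*} [Fintype m] [DecidableEq m] [Fintype ι]
    [DecidableEq ι] {P : ι → Matrix m m ℂ} (hherm : ∀ i, (P i)ᴴ = P i)
    (hidem : ∀ i, P i * P i = P i) (horth : ∀ i j, i ≠ j → P i * P j = 0)
    (hsum : ∑ i, P i = 1) {ρ : Matrix m m ℂ} (hρ : 0 ≤ ρ) :
    ∃ D, 0 ≤ D ∧ blockDephase P D = D ∧ ρ ≤ D ∧ D.trace = ρ.trace +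
      ((∑ q ∈ (Finset.univ : Finset ι).offDiag, traceNorm (P q.1 * ρ * P q.2) : ℝ) : ℂ) := by
  refine ⟨blockDephase P ρ +
    ∑ q ∈ (Finset.univ : Finset ι).offDiag, CFC.abs (P q.1 * ρ * P q.2), ?_, ?_, ?_, ?_⟩
  · exact add_nonneg (blockDephase_nonneg hherm hρ)
      (Finset.sum_nonneg fun q _ => CFC.abs_nonneg _)
  · rw [map_add, map_sum, blockDephase_blockDephase hidem horth]
    simp only [blockDephase_abs_mul_mul hherm hidem horth]
  · conv_lhs => rw [← blockDephase_add_sum_offDiag hsum ρ]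
    exact add_le_add_right (sum_offDiag_le_sum_abs hherm horth hρ.isSelfAdjoint) _
  · push_cast
    simp only [trace_add, trace_sum, trace_blockDephase hidem hsum, trace_abs_eq_traceNorm]

/-- For pairwise orthogonal projections `P 1, …, P n` summing to the identity
and a density matrix `ρ`, the robustness of block coherence is bounded by the `ℓ₁`-norm of
block coherence:
`inf { s ≥ 0 : ∃ density δ, ρ ≤ (1+s) • Δ[δ] } ≤ ∑_{i ≠ j} ‖P i ρ P j‖₁`. -/
theorem robustness_le_l1_block_coherence
    (n d : ℕ) (P : Fin n → Matrix (Fin d) (Fin d) ℂ)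
    (hherm : ∀ i, (P i)ᴴ = P i)
    (hidem : ∀ i, P i * P i = P i)
    (horth : ∀ i j, i ≠ j → P i * P j = 0)
    (hsum : ∑ i, P i = 1)
    (ρ : Matrix (Fin d) (Fin d) ℂ) (hρ : ρ.PosSemidef) (hρtr : ρ.trace = 1) :
    sInf { s : ℝ | 0 ≤ s ∧ ∃ δ : Matrix (Fin d) (Fin d) ℂ, δ.PosSemidef ∧ δ.trace = 1 ∧
        ((1 + s) • (∑ i, P i * δ * P i) - ρ).PosSemidef }
      ≤ ∑ q ∈ (Finset.univ : Finset (Fin n)).offDiag, traceNorm (P q.1 * ρ * P q.2) := by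
  obtain ⟨D, hD, hDfix, hρD, hDtr⟩ :=
    exists_blockDephase_fixed_ge hherm hidem horth hsum hρ.nonneg
  set s := ∑ q ∈ (Finset.univ : Finset (Fin n)).offDiag, traceNorm (P q.1 * ρ * P q.2)
  have hs : 0 ≤ s := Finset.sum_nonneg fun q _ => traceNorm_nonneg _
  have hs1 : 1 + s ≠ 0 := by positivity
  refine csInf_le ⟨0, fun _ h => h.1⟩ ⟨hs, (1 + s)⁻¹ • D, ?_, ?_, ?_⟩
  · exact nonneg_iff_posSemidef.mp (smul_nonneg (by positivity) hD)
  · rw [trace_smul, hDtr, hρtr, Complex.real_smul, ← Complex.ofReal_one, ← Complex.ofReal_add,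
      ← Complex.ofReal_mul, inv_mul_cancel₀ hs1, Complex.ofReal_one]
  · rw [← blockDephase_apply, LinearMap.map_smul_of_tower, hDfix, smul_smul,
      mul_inv_cancel₀ hs1, one_smul]
    exact hρD
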